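/- Let X : ℝ^{n₁×⋯×n_d} → ℝ^m be a linear map, let B ∈ G_{r,s,τ}, η ∈ ℝ^m, and y = X(B) + η, and define the loss L(Z) = ‖y − X(Z)‖₂². Fix γ ∈ (0,1) and suppose there is δ ∈ (0, γ/(4+γ)) such that (1−δ)·‖Z‖_F² ≤ ‖X(Z)‖₂² ≤ (1+δ)·‖Z‖_F² for every Z ∈ G_{2r,s,2τ} (where 2r = (2r₁,…,2r_d)). Set μ = 1/(1+δ) and b = (1+3δ)/(1−δ). Suppose B^k, B^{k+1} ∈ G_{r,s,τ} satisfy ‖B^{k+1} − W̃^k‖_F ≤ ‖B − W̃^k‖_F, where W̃^k = B^k − μ·X*(X(B^k) − y) and X* is the adjoint of X with respect to the Frobenius inner product. Then L(B^{k+1}) ≤ γ·L(B^k) + b·‖η‖₂². -/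

import Mathlib

open scoped BigOperators

noncomputable section

/-- Frobenius (ℓ2) norm of a finitely-indexed real array. -/
def frob {ι : Type*} [Fintype ι] (Z : ι → ℝ) : ℝ :=
  Real.sqrt (∑ x, (Z x) ^ 2)

/-- ℓ1 norm of a finitely-indexed real array. -/
def l1 {ι : Type*} [Fintype ι] (Z : ι → ℝ) : ℝ :=
  ∑ x, |Z x|

/-- Tucker product `S ×₁ U₁ ×₂ U₂ ⋯ ×_d U_d`. -/
def tucker {d : ℕ} {n r : Fin d → ℕ} (S : (∀ i, Fin (r i)) → ℝ)
    (U : ∀ i, Fin (n i) → Fin (r i) → ℝ) : (∀ i, Fin (n i)) → ℝ :=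
  fun x => ∑ k : ∀ i, Fin (r i), S k * ∏ i, U i (x i) (k i)

/-- The set `G_{r,s,τ}` of `r`-rank, `s`-sparse tensors whose core has ℓ1 norm at most `τ`
and whose factor-matrix columns have at most `sᵢ` nonzero entries and ℓ2 norm at most 1. -/
def Gset {d : ℕ} (n r s : Fin d → ℕ) (τ : ℝ) : Set ((∀ i, Fin (n i)) → ℝ) :=
  { Z | ∃ (S : (∀ i, Fin (r i)) → ℝ) (U : ∀ i, Fin (n i) → Fin (r i) → ℝ),
      l1 S ≤ τ ∧
      (∀ i j, (Function.support fun a => U i a j).ncard ≤ s i) ∧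
      (∀ i j, Real.sqrt (∑ a, (U i a j) ^ 2) ≤ 1) ∧
      Z = tucker S U }

/-!
Write `w = y - X(Bᵏ)` for the current residual and `u = Bᵏ⁺¹ - Bᵏ`, `v = B - Bᵏ`; both differences
lie in `G_{2r,s,2τ}`, where the restricted isometry property holds. Expanding the squares in the
projection inequality and using the adjoint turns it into
`(1 + δ)‖u‖² - 2⟨X u, w⟩ ≤ (1 + δ)‖v‖² - 2⟨X v, w⟩`. The upper RIP bound for `u` gives
`L(Bᵏ⁺¹) = ‖w - X u‖² ≤ ‖w‖² - 2⟨X v, w⟩ + (1 + δ)‖v‖²`, and the lower one for `v` bounds this by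
`‖w - X v‖² + 2δ/(1 - δ) ‖X v‖²`. Finally `w - X v = η` and `‖X v‖² = ‖w - η‖² ≤ 2‖w‖² + 2‖η‖²`,
and `4δ/(1 - δ) ≤ γ` is exactly the assumption `δ < γ/(4 + γ)`.
-/

open Function RealInnerProductSpace

lemma l1_neg {ι : Type*} [Fintype ι] (Z : ι → ℝ) : l1 (-Z) = l1 Z := by
  simp [l1]

lemma l1_add_le {ι : Type*} [Fintype ι] (Z W : ι → ℝ) : l1 (Z + W) ≤ l1 Z + l1 W := by
  rw [l1, l1, l1, ← Finset.sum_add_distrib]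
  exact Finset.sum_le_sum fun x _ => abs_add_le _ _

lemma l1_extend_zero {ι κ : Type*} [Fintype ι] [Fintype κ] {f : ι → κ} (hf : Injective f)
    (Z : ι → ℝ) : l1 (extend f Z 0) = l1 Z :=
  (Fintype.sum_of_injective f hf _ _
    (fun k hk => by simp [extend_apply' _ _ _ (by simpa using hk)])
    (fun i => by simp [hf.extend_apply])).symm

section Tucker

variable {d : ℕ} {n r : Fin d → ℕ}

lemma tucker_neg (S : (∀ i, Fin (r i)) → ℝ) (U : ∀ i, Fin (n i) → Fin (r i) → ℝ) :
    tucker (-S) U = -tucker S U := by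
  funext x
  simp [tucker]

lemma tucker_add (S S' : (∀ i, Fin (r i)) → ℝ) (U : ∀ i, Fin (n i) → Fin (r i) → ℝ) :
    tucker (S + S') U = tucker S U + tucker S' U := by
  funext x
  simp [tucker, add_mul, Finset.sum_add_distrib]

lemma tucker_extend_zero {r' : Fin d → ℕ} (e : ∀ i, Fin (r i) ↪ Fin (r' i))
    (S : (∀ i, Fin (r i)) → ℝ) (U : ∀ i, Fin (n i) → Fin (r' i) → ℝ) :
    tucker (extend (Embedding.piCongrRight e) S 0) U = tucker S fun i a k => U i a (e i k) := by
  funext x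
  refine (Fintype.sum_of_injective _ (Embedding.piCongrRight e).injective _ _
    (fun k hk => ?_) (fun k => ?_)).symm
  · simp [extend_apply' _ _ _ (by simpa using hk)]
  · simp [(Embedding.piCongrRight e).injective.extend_apply]

variable {s : Fin d → ℕ}

lemma neg_mem_Gset {τ : ℝ} {Z : (∀ i, Fin (n i)) → ℝ} (hZ : Z ∈ Gset n r s τ) :
    -Z ∈ Gset n r s τ := by
  obtain ⟨S, U, hS, hsupp, hnorm, rfl⟩ := hZ
  exact ⟨-S, U, by rwa [l1_neg], hsupp, hnorm, (tucker_neg S U).symm⟩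

/-- The factor matrices are concatenated and the two cores placed in complementary blocks. -/
lemma add_mem_Gset {r' : Fin d → ℕ} {τ τ' : ℝ} {Z Z' : (∀ i, Fin (n i)) → ℝ}
    (hZ : Z ∈ Gset n r s τ) (hZ' : Z' ∈ Gset n r' s τ') :
    Z + Z' ∈ Gset n (fun i => r i + r' i) s (τ + τ') := by
  obtain ⟨S, U, hS, hsupp, hnorm, rfl⟩ := hZ
  obtain ⟨S', U', hS', hsupp', hnorm', rfl⟩ := hZ'
  let eL := Embedding.piCongrRight fun i => Fin.castAddEmb (n := r i) (r' i)
  let eR := Embedding.piCongrRight fun i => Fin.natAddEmb (r i) (m := r' i)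
  refine ⟨extend eL S 0 + extend eR S' 0, fun i a => Fin.append (U i a) (U' i a),
    ?_, fun i k => ?_, fun i k => ?_, ?_⟩
  · calc l1 (extend eL S 0 + extend eR S' 0) ≤ l1 (extend eL S 0) + l1 (extend eR S' 0) :=
          l1_add_le _ _
      _ ≤ τ + τ' := by
          rw [l1_extend_zero eL.injective, l1_extend_zero eR.injective]
          exact add_le_add hS hS'
  · refine Fin.addCases (fun k => ?_) (fun k => ?_) k
    · simpa [Fin.append_left] using hsupp i k
    · simpa [Fin.append_right] using hsupp' i k
  · refine Fin.addCases (fun k => ?_) (fun k => ?_) k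
    · simpa [Fin.append_left] using hnorm i k
    · simpa [Fin.append_right] using hnorm' i k
  · rw [tucker_add, tucker_extend_zero, tucker_extend_zero]
    simp [Fin.append_left, Fin.append_right]

lemma sub_mem_Gset_two_mul {τ : ℝ} {Z Z' : (∀ i, Fin (n i)) → ℝ}
    (hZ : Z ∈ Gset n r s τ) (hZ' : Z' ∈ Gset n r s τ) :
    Z - Z' ∈ Gset n (fun i => 2 * r i) s (2 * τ) := by
  simpa only [sub_eq_add_neg, two_mul] using add_mem_Gset hZ (neg_mem_Gset hZ')

end Tucker

section GradientStep

variable {E F : Type*} [NormedAddCommGroup E] [InnerProductSpace ℝ E]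
  [NormedAddCommGroup F] [InnerProductSpace ℝ F]

lemma sq_norm_add_two_mul_inner_le_of_norm_add_smul_le {u v g : E} {μ : ℝ}
    (h : ‖u + μ • g‖ ≤ ‖v + μ • g‖) :
    ‖u‖ ^ 2 + 2 * μ * ⟪u, g⟫ ≤ ‖v‖ ^ 2 + 2 * μ * ⟪v, g⟫ := by
  have h2 := pow_le_pow_left₀ (norm_nonneg _) h 2
  rw [norm_add_sq_real, norm_add_sq_real, inner_smul_right, inner_smul_right] at h2
  linarith

theorem sq_norm_sub_le_of_gradient_step (A : E →ₗ[ℝ] F) (Astar : F →ₗ[ℝ] E)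
    (hadj : ∀ z w, ⟪A z, w⟫ = ⟪z, Astar w⟫) {δ : ℝ} (hδ0 : 0 ≤ δ) (hδ1 : δ < 1)
    {b₀ b b' : E} {η y : F} (hy : y = A b₀ + η)
    (hupper : ‖A (b' - b)‖ ^ 2 ≤ (1 + δ) * ‖b' - b‖ ^ 2)
    (hlower : (1 - δ) * ‖b₀ - b‖ ^ 2 ≤ ‖A (b₀ - b)‖ ^ 2)
    (hstep : ‖b' - (b - (1 + δ)⁻¹ • Astar (A b - y))‖ ≤
      ‖b₀ - (b - (1 + δ)⁻¹ • Astar (A b - y))‖) :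
    ‖y - A b'‖ ^ 2 ≤ 4 * δ / (1 - δ) * ‖y - A b‖ ^ 2 + (1 + 3 * δ) / (1 - δ) * ‖η‖ ^ 2 := by
  set w := y - A b
  set u := b' - b
  set v := b₀ - b
  have hinner : ∀ z, ⟪z, Astar (A b - y)⟫ = -⟪A z, w⟫ := fun z => by
    rw [← hadj, ← inner_neg_right, neg_sub]
  have hproj := sq_norm_add_two_mul_inner_le_of_norm_add_smul_le
    (show ‖u + (1 + δ)⁻¹ • Astar (A b - y)‖ ≤ ‖v + (1 + δ)⁻¹ • Astar (A b - y)‖ by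
      simpa only [u, v, sub_sub_eq_add_sub, add_sub_right_comm] using hstep)
  rw [hinner, hinner] at hproj
  have hloss : ‖y - A b'‖ ^ 2 = ‖w‖ ^ 2 - 2 * ⟪A u, w⟫ + ‖A u‖ ^ 2 := by
    rw [show y - A b' = w - A u by simp only [w, u, map_sub]; abel, norm_sub_sq_real,
      real_inner_comm]
  have hnoise : ‖η‖ ^ 2 = ‖w‖ ^ 2 - 2 * ⟪A v, w⟫ + ‖A v‖ ^ 2 := by
    rw [show η = w - A v by simp only [w, v, hy, map_sub]; abel, norm_sub_sq_real,
      real_inner_comm]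
  have hAv : ‖A v‖ ^ 2 ≤ 2 * (‖w‖ ^ 2 + ‖η‖ ^ 2) := by
    rw [show A v = w - η by simp only [w, v, hy, map_sub]; abel]
    exact (pow_le_pow_left₀ (norm_nonneg _) (norm_sub_le w η) 2).trans add_sq_le
  have h1δ : 0 < 1 - δ := by linarith
  have hproj' : (1 + δ) * ‖u‖ ^ 2 - 2 * ⟪A u, w⟫ ≤ (1 + δ) * ‖v‖ ^ 2 - 2 * ⟪A v, w⟫ := by
    have := mul_le_mul_of_nonneg_left hproj (by linarith : (0 : ℝ) ≤ 1 + δ)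
    field_simp at this
    linarith
  have hv : ‖v‖ ^ 2 ≤ ‖A v‖ ^ 2 / (1 - δ) := by rw [le_div_iff₀ h1δ]; linarith
  calc ‖y - A b'‖ ^ 2 ≤ ‖w‖ ^ 2 - 2 * ⟪A u, w⟫ + (1 + δ) * ‖u‖ ^ 2 := by linarith
    _ ≤ ‖w‖ ^ 2 - 2 * ⟪A v, w⟫ + (1 + δ) * (‖A v‖ ^ 2 / (1 - δ)) := by
        have := mul_le_mul_of_nonneg_left hv (by linarith : (0 : ℝ) ≤ 1 + δ)
        linarith
    _ = ‖η‖ ^ 2 + 2 * δ / (1 - δ) * ‖A v‖ ^ 2 := by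
        rw [hnoise]; field_simp; ring
    _ ≤ ‖η‖ ^ 2 + 2 * δ / (1 - δ) * (2 * (‖w‖ ^ 2 + ‖η‖ ^ 2)) := by
        gcongr
    _ = 4 * δ / (1 - δ) * ‖w‖ ^ 2 + (1 + 3 * δ) / (1 - δ) * ‖η‖ ^ 2 := by
        field_simp; ring

end GradientStep

-- `ι → ℝ` carries the sup norm, so arrays are moved by `toLp 2` to `EuclideanSpace ℝ ι`,
-- where `frob` is the norm and `∑ x, Z x * W x` the inner product.
section Coordinates

variable {ι κ : Type*} [Fintype ι] [Fintype κ]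

open WithLp (toLp)

lemma sum_sq_eq_norm_toLp_sq (Z : ι → ℝ) : ∑ x, Z x ^ 2 = ‖toLp 2 Z‖ ^ 2 :=
  (EuclideanSpace.real_norm_sq_eq _).symm

lemma frob_eq_norm_toLp (Z : ι → ℝ) : frob Z = ‖toLp 2 Z‖ := by
  rw [frob, sum_sq_eq_norm_toLp_sq, Real.sqrt_sq (norm_nonneg _)]

lemma sum_mul_eq_inner_toLp (Z W : ι → ℝ) : ∑ x, Z x * W x = ⟪toLp 2 Z, toLp 2 W⟫ := by
  simp [EuclideanSpace.inner_toLp_toLp, dotProduct, mul_comm]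

theorem sum_sq_sub_le_of_gradient_step (X : (ι → ℝ) →ₗ[ℝ] κ → ℝ) (Xstar : (κ → ℝ) →ₗ[ℝ] ι → ℝ)
    (hadj : ∀ Z v, ∑ i, X Z i * v i = ∑ x, Z x * Xstar v x) {δ : ℝ} (hδ0 : 0 ≤ δ) (hδ1 : δ < 1)
    {B₀ B B' : ι → ℝ} {η y : κ → ℝ} (hy : y = X B₀ + η)
    (hupper : ∑ i, X (B' - B) i ^ 2 ≤ (1 + δ) * frob (B' - B) ^ 2)
    (hlower : (1 - δ) * frob (B₀ - B) ^ 2 ≤ ∑ i, X (B₀ - B) i ^ 2)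
    (hstep : frob (B' - (B - (1 + δ)⁻¹ • Xstar (X B - y))) ≤
      frob (B₀ - (B - (1 + δ)⁻¹ • Xstar (X B - y)))) :
    ∑ i, (y i - X B' i) ^ 2 ≤
      4 * δ / (1 - δ) * ∑ i, (y i - X B i) ^ 2 + (1 + 3 * δ) / (1 - δ) * ∑ i, η i ^ 2 := by
  let A := (WithLp.linearEquiv 2 ℝ (ι → ℝ)).symm.arrowCongr (WithLp.linearEquiv 2 ℝ (κ → ℝ)).symm X
  let Astar :=
    (WithLp.linearEquiv 2 ℝ (κ → ℝ)).symm.arrowCongr (WithLp.linearEquiv 2 ℝ (ι → ℝ)).symm Xstar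
  have hA : ∀ Z, A (toLp 2 Z) = toLp 2 (X Z) := fun _ => rfl
  have hAstar : ∀ v, Astar (toLp 2 v) = toLp 2 (Xstar v) := fun _ => rfl
  have key := sq_norm_sub_le_of_gradient_step A Astar
    (fun z w => (sum_mul_eq_inner_toLp _ _).symm.trans
      ((hadj z.ofLp w.ofLp).trans (sum_mul_eq_inner_toLp _ _)))
    hδ0 hδ1 (b₀ := toLp 2 B₀) (b := toLp 2 B) (b' := toLp 2 B') (η := toLp 2 η) (y := toLp 2 y)
    (by rw [hy, WithLp.toLp_add, hA])
    (by simpa only [← WithLp.toLp_sub, hA, ← sum_sq_eq_norm_toLp_sq, frob_eq_norm_toLp] using hupper)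
    (by simpa only [← WithLp.toLp_sub, hA, ← sum_sq_eq_norm_toLp_sq, frob_eq_norm_toLp] using hlower)
    (by simpa only [← WithLp.toLp_sub, ← WithLp.toLp_smul, hA, hAstar, frob_eq_norm_toLp] using hstep)
  simpa only [← WithLp.toLp_sub, hA, ← sum_sq_eq_norm_toLp_sq, Pi.sub_apply] using key

end Coordinates

theorem tpgd_one_step_loss_general
    {d m : ℕ} {n r s : Fin d → ℕ} {τ : ℝ}
    (X : ((∀ i, Fin (n i)) → ℝ) →ₗ[ℝ] (Fin m → ℝ))
    (Xstar : (Fin m → ℝ) →ₗ[ℝ] ((∀ i, Fin (n i)) → ℝ))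
    (hadj : ∀ (Z : (∀ i, Fin (n i)) → ℝ) (v : Fin m → ℝ),
      ∑ i, X Z i * v i = ∑ x, Z x * Xstar v x)
    (Btrue : (∀ i, Fin (n i)) → ℝ) (hBtrue : Btrue ∈ Gset n r s τ)
    (η y : Fin m → ℝ) (hy : y = X Btrue + η)
    (L : ((∀ i, Fin (n i)) → ℝ) → ℝ) (hL : ∀ Z, L Z = ∑ i, (y i - X Z i) ^ 2)
    (γ δ : ℝ) (hγ : γ ∈ Set.Ioo (0 : ℝ) 1) (hδ0 : 0 < δ) (hδ : δ < γ / (4 + γ))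
    (hRIP : ∀ Z ∈ Gset n (fun i => 2 * r i) s (2 * τ),
      (1 - δ) * frob Z ^ 2 ≤ ∑ i, (X Z i) ^ 2 ∧
      ∑ i, (X Z i) ^ 2 ≤ (1 + δ) * frob Z ^ 2)
    (μ b : ℝ) (hμ : μ = 1 / (1 + δ)) (hb : b = (1 + 3 * δ) / (1 - δ))
    (Bk Bk1 : (∀ i, Fin (n i)) → ℝ) (hBk : Bk ∈ Gset n r s τ) (hBk1 : Bk1 ∈ Gset n r s τ)
    (hstep : frob (Bk1 - (Bk - μ • Xstar (X Bk - y))) ≤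
      frob (Btrue - (Bk - μ • Xstar (X Bk - y)))) :
    L Bk1 ≤ γ * L Bk + b * ∑ i, (η i) ^ 2 := by
  obtain ⟨hγ0, -⟩ := hγ
  have hδγ : δ * (4 + γ) < γ := (lt_div_iff₀ (by linarith)).mp hδ
  have hδ1 : δ < 1 := by nlinarith
  have hcontraction : 4 * δ / (1 - δ) ≤ γ := by
    rw [div_le_iff₀ (by linarith)]
    nlinarith
  have key := sum_sq_sub_le_of_gradient_step X Xstar hadj hδ0.le hδ1 hy
    (hRIP _ (sub_mem_Gset_two_mul hBk1 hBk)).2 (hRIP _ (sub_mem_Gset_two_mul hBtrue hBk)).1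
    (by simpa only [hμ, one_div] using hstep)
  rw [hL, hL, hb]
  refine key.trans ?_
  gcongr

/-- one-step loss contraction for tensor projected gradient descent. -/
theorem tpgd_one_step_loss
    {d m : ℕ} {n r s : Fin d → ℕ} {τ : ℝ} (hτ : 0 < τ)
    (X : ((∀ i, Fin (n i)) → ℝ) →ₗ[ℝ] (Fin m → ℝ))
    (Xstar : (Fin m → ℝ) →ₗ[ℝ] ((∀ i, Fin (n i)) → ℝ))
    (hadj : ∀ (Z : (∀ i, Fin (n i)) → ℝ) (v : Fin m → ℝ),
      ∑ i, X Z i * v i = ∑ x, Z x * Xstar v x)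
    (Btrue : (∀ i, Fin (n i)) → ℝ) (hBtrue : Btrue ∈ Gset n r s τ)
    (η y : Fin m → ℝ) (hy : y = X Btrue + η)
    (L : ((∀ i, Fin (n i)) → ℝ) → ℝ) (hL : ∀ Z, L Z = ∑ i, (y i - X Z i) ^ 2)
    (γ δ : ℝ) (hγ : γ ∈ Set.Ioo (0 : ℝ) 1) (hδ0 : 0 < δ) (hδ : δ < γ / (4 + γ))
    (hRIP : ∀ Z ∈ Gset n (fun i => 2 * r i) s (2 * τ),
      (1 - δ) * frob Z ^ 2 ≤ ∑ i, (X Z i) ^ 2 ∧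
      ∑ i, (X Z i) ^ 2 ≤ (1 + δ) * frob Z ^ 2)
    (μ b : ℝ) (hμ : μ = 1 / (1 + δ)) (hb : b = (1 + 3 * δ) / (1 - δ))
    (Bk Bk1 : (∀ i, Fin (n i)) → ℝ) (hBk : Bk ∈ Gset n r s τ) (hBk1 : Bk1 ∈ Gset n r s τ)
    (hstep : frob (Bk1 - (Bk - μ • Xstar (X Bk - y))) ≤
      frob (Btrue - (Bk - μ • Xstar (X Bk - y)))) :
    L Bk1 ≤ γ * L Bk + b * ∑ i, (η i) ^ 2 :=
  tpgd_one_step_loss_general X Xstar hadj Btrue hBtrue η y hy L hL γ δ hγ hδ0 hδ hRIP μ b hμ hb Bk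
    Bk1 hBk hBk1 hstep
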